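/- In the group algebra of the free product ℤ₂^{*N} = ℤ₂ * ⋯ * ℤ₂ (N ≥ 2 copies, generators g₁,…,g_N of order 2), the element ρ = g₁ + ⋯ + g_N generates a polynomial algebra: its powers are linearly independent over ℂ. -/

import Mathlib

/-!
For every `μ` there is a two-dimensional representation of `ℤ₂^{*N}` in which `g₁` acts by an
upper and all other generators by a lower triangular involution, chosen so that `(1, 1)` is an
eigenvector of the image of `ρ` with eigenvalue `μ`. A polynomial annihilating `ρ` therefore
vanishes at every `μ`, so it is zero: `ρ` is transcendental, i.e. its powers are independent.
-/

open Polynomial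

theorem Transcendental.linearIndependent_pow {R A : Type*} [CommRing R] [Ring A] [Algebra R A]
    {x : A} (hx : Transcendental R x) : LinearIndependent R (x ^ · : ℕ → A) := by
  have hpow := (linearIndependent_powers_iff_aeval (LinearMap.mulLeft R x) 1).mpr fun p hp => by
    refine (transcendental_iff.mp hx) p ?_
    have h : Polynomial.aeval (LinearMap.mulLeft R x) p =
        LinearMap.mulLeft R (Polynomial.aeval x p) :=
      aeval_algHom_apply (Algebra.lmul R A) x p
    simpa [h] using hp
  simpa [LinearMap.pow_mulLeft] using hpow

theorem transcendental_of_infinite_eigenvalues {K A V : Type*} [Field K] [Ring A] [Algebra K A]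
    [AddCommGroup V] [Module K V] {x : A} {S : Set K} (hS : S.Infinite)
    (h : ∀ μ ∈ S, ∃ φ : A →ₐ[K] Module.End K V, (φ x).HasEigenvalue μ) :
    Transcendental K x := by
  refine transcendental_iff.mpr fun p hp => p.eq_zero_of_infinite_isRoot (hS.mono fun μ hμ => ?_)
  obtain ⟨φ, hφ⟩ := h μ hμ
  obtain ⟨v, hv⟩ := hφ.exists_hasEigenvector
  have := Module.End.aeval_apply_of_hasEigenvector (p := p) hv
  rw [aeval_algHom_apply, hp, map_zero, LinearMap.zero_apply, eq_comm, smul_eq_zero] at this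
  exact this.resolve_right hv.2

def involutionHom {M : Type*} [Monoid M] (a : M) (ha : a * a = 1) :
    Multiplicative (ZMod 2) →* M where
  toFun x := if x = 1 then 1 else a
  map_one' := if_pos rfl
  map_mul' x y := by
    have cases : ∀ x : Multiplicative (ZMod 2), x = 1 ∨ x = .ofAdd 1 := by decide
    have hne : Multiplicative.ofAdd (1 : ZMod 2) ≠ 1 := by decide
    have hsq : Multiplicative.ofAdd (1 : ZMod 2) * .ofAdd 1 = 1 := by decide
    rcases cases x with rfl | rfl <;> rcases cases y with rfl | rfl <;> simp [hne, hsq, ha]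

theorem involutionHom_ofAdd_one {M : Type*} [Monoid M] (a : M) (ha : a * a = 1) :
    involutionHom a ha (Multiplicative.ofAdd 1) = a :=
  if_neg (c := Multiplicative.ofAdd (1 : ZMod 2) = 1) (t := 1) (by decide)

section Matrices

open Matrix

variable {K : Type*} [Field K]

def upperInvolution (a : K) : Matrix (Fin 2) (Fin 2) K := !![1, a; 0, -1]

def lowerInvolution (b : K) : Matrix (Fin 2) (Fin 2) K := !![-1, 0; b, 1]

theorem upperInvolution_mul_self (a : K) : upperInvolution a * upperInvolution a = 1 := by
  ext i j; fin_cases i <;> fin_cases j <;> simp [upperInvolution]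

theorem lowerInvolution_mul_self (b : K) : lowerInvolution b * lowerInvolution b = 1 := by
  ext i j; fin_cases i <;> fin_cases j <;> simp [lowerInvolution]

theorem upperInvolution_add_smul_lowerInvolution_mulVec {c : K} (hc : c ≠ 0) (μ : K) :
    (upperInvolution (μ + c - 1) + c • lowerInvolution ((μ + 1 - c) / c)) *ᵥ ![1, 1] =
      μ • ![1, 1] := by
  ext i
  fin_cases i <;> simp [upperInvolution, lowerInvolution, mulVec, dotProduct, Fin.sum_univ_two]
  · ring
  · field_simp
    ring

end Matrices

abbrev ZModTwoFreeProduct (ι : Type*) := Monoid.CoprodI fun _ : ι => Multiplicative (ZMod 2)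

namespace ZModTwoFreeProduct

variable {K : Type*} [Field K] {n : ℕ}

def generator {ι : Type*} (i : ι) : ZModTwoFreeProduct ι :=
  Monoid.CoprodI.of (i := i) (Multiplicative.ofAdd 1)

def dihedralRep (a b : K) : ZModTwoFreeProduct (Fin (n + 1)) →* Matrix (Fin 2) (Fin 2) K :=
  Monoid.CoprodI.lift <| Fin.cases (involutionHom _ (upperInvolution_mul_self a))
    fun _ => involutionHom _ (lowerInvolution_mul_self b)

theorem sum_dihedralRep_generator (a b : K) :
    ∑ i, dihedralRep (n := n) a b (generator i) =
      upperInvolution a + (n : K) • lowerInvolution b := by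
  simp only [dihedralRep, generator, Fin.sum_univ_succ, Monoid.CoprodI.lift_of, Fin.cases_zero,
    Fin.cases_succ, involutionHom_ofAdd_one, Finset.sum_const, Finset.card_univ, Fintype.card_fin,
    Nat.cast_smul_eq_nsmul]

theorem transcendental_sum_generator [Infinite K] (hn : (n : K) ≠ 0) :
    Transcendental K (∑ i : Fin (n + 1), MonoidAlgebra.of K _ (generator i)) := by
  refine transcendental_of_infinite_eigenvalues (V := Fin 2 → K) Set.infinite_univ fun μ _ => ?_
  let φ := MonoidAlgebra.lift K _ _ (dihedralRep (n := n) (μ + n - 1) ((μ + 1 - n) / n))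
  refine ⟨Matrix.toLinAlgEquiv'.toAlgHom.comp φ, Module.End.hasEigenvalue_of_hasEigenvector
    (x := ![1, 1]) ⟨Module.End.mem_eigenspace_iff.mpr ?_, by simp⟩⟩
  have hφ : φ (∑ i, MonoidAlgebra.of K _ (generator i)) =
      upperInvolution (μ + n - 1) + (n : K) • lowerInvolution ((μ + 1 - n) / n) := by
    simp only [φ, map_sum, MonoidAlgebra.lift_of, sum_dihedralRep_generator]
  rw [AlgHom.comp_apply, hφ]
  exact upperInvolution_add_smul_lowerInvolution_mulVec hn μ

end ZModTwoFreeProduct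

/-- In the group algebra of the free product `ℤ₂^{*N}` of `N ≥ 2` copies of
`ℤ₂`, with generators `g i` (the images of the nontrivial elements of the factors),
the element `ρ = g₁ + ⋯ + g_N` generates a polynomial algebra: its powers are linearly
independent over `ℂ`. -/
theorem stmt8 {N : ℕ} (hN : 2 ≤ N)
    (g : Fin N → Monoid.CoprodI (fun _ : Fin N => Multiplicative (ZMod 2)))
    (hg : ∀ i, g i = Monoid.CoprodI.of (i := i) (Multiplicative.ofAdd (1 : ZMod 2)))
    (ρ : MonoidAlgebra ℂ (Monoid.CoprodI (fun _ : Fin N => Multiplicative (ZMod 2))))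
    (hρ : ρ = ∑ i, MonoidAlgebra.of ℂ _ (g i)) :
    LinearIndependent ℂ (fun n : ℕ => ρ ^ n) := by
  obtain ⟨n, rfl⟩ : ∃ n, N = n + 1 := ⟨N - 1, by omega⟩
  obtain rfl : g = ZModTwoFreeProduct.generator := funext hg
  subst hρ
  exact (ZModTwoFreeProduct.transcendental_sum_generator (K := ℂ)
    (Nat.cast_ne_zero.mpr (by omega))).linearIndependent_pow
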